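/- arXiv:2112.15179 — 2 statements merged into one kernel-verified Lean document; each statement's English description precedes it below -/
import Mathlib

section
/- Let N be an IMLN and let u_1, u_2 be elements of R_min(N). Then U(U(N, u_1), u_2) = U(U(N, u_2), u_1), i.e. unfolding at u_1 and then at u_2 yields the same IMLN as unfolding at u_2 and then at u_1. -/
/-- The data of a rooted binary internally multi-labelled phylogenetic network (IMLN):
a finite directed graph (no parallel arcs, since `Arc` is a relation) with a
distinguished root, leaf labels in `X` and reticulation/elementary labels in `Λ`. -/
structure IMLN (X : Type) (Λ : Type) : Type 1 where
  V : Type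
  fintypeV : Fintype V
  Arc : V → V → Prop
  root : V
  leafLabel : V → X
  retLabel : V → Λ

namespace IMLN

variable {X Λ : Type}

/-- In-degree of a node. -/
noncomputable def inDeg (N : IMLN X Λ) (v : N.V) : ℕ := {u : N.V | N.Arc u v}.ncard

/-- Out-degree of a node. -/
noncomputable def outDeg (N : IMLN X Λ) (v : N.V) : ℕ := {w : N.V | N.Arc v w}.ncard

/-- A leaf: a node of out-degree zero. -/
def IsLeaf (N : IMLN X Λ) (v : N.V) : Prop := N.outDeg v = 0

/-- A reticulation node: in-degree two and out-degree one. -/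
def IsRet (N : IMLN X Λ) (v : N.V) : Prop := N.inDeg v = 2 ∧ N.outDeg v = 1

/-- An elementary node: in-degree at most one and out-degree one. -/
def IsElem (N : IMLN X Λ) (v : N.V) : Prop := N.inDeg v ≤ 1 ∧ N.outDeg v = 1

/-- A tree node: a leaf, or a node of out-degree two (in particular not of out-degree one). -/
def IsTreeNode (N : IMLN X Λ) (v : N.V) : Prop := N.outDeg v ≠ 1

/-- An internal node: a non-leaf. -/
def IsInternal (N : IMLN X Λ) (v : N.V) : Prop := ¬ N.IsLeaf v

/-- Reachability by a (possibly trivial) directed path. -/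
def Reaches (N : IMLN X Λ) (u v : N.V) : Prop := Relation.ReflTransGen N.Arc u v

/-- Well-formedness: `N` is a rooted binary internally multi-labelled phylogenetic network. -/
structure IsIMLN (N : IMLN X Λ) : Prop where
  acyclic : ∀ v : N.V, ¬ Relation.TransGen N.Arc v v
  rootIn : N.inDeg N.root = 0
  rootOut : N.outDeg N.root = 1 ∨ N.outDeg N.root = 2
  uniqueRoot : ∀ v : N.V, N.inDeg v = 0 → v = N.root
  connected : ∀ v : N.V, N.Reaches N.root v
  degrees : ∀ v : N.V, v ≠ N.root →
      (N.inDeg v = 1 ∧ (N.outDeg v = 0 ∨ N.outDeg v = 1 ∨ N.outDeg v = 2)) ∨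
      (N.inDeg v = 2 ∧ N.outDeg v = 1)
  leafSurj : ∀ x : X, ∃ v : N.V, N.IsLeaf v ∧ N.leafLabel v = x
  retInj : ∀ u v : N.V, N.IsRet u → N.IsRet v → N.retLabel u = N.retLabel v → u = v
  retElemLabels : ∀ u v : N.V, N.IsRet u → N.IsElem v → N.retLabel u ≠ N.retLabel v

/-- An internally labelled phylogenetic network: an IMLN with no elementary nodes
whose leaf labelling and reticulation labelling are bijections. -/
def IsILPN (N : IMLN X Λ) : Prop :=
  N.IsIMLN ∧ (∀ v : N.V, ¬ N.IsElem v) ∧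
    (∀ x : X, ∃! v : N.V, N.IsLeaf v ∧ N.leafLabel v = x) ∧
    (∀ l : Λ, ∃! v : N.V, N.IsRet v ∧ N.retLabel v = l)

/-- `u ∈ R_min(N)`: a reticulation node with no reticulation node strictly below it. -/
def IsMinRet (N : IMLN X Λ) (u : N.V) : Prop :=
  N.IsRet u ∧ ∀ w : N.V, N.IsRet w → N.Reaches u w → w = u

/-- The sub-IMLN `N(u)` rooted at `u`. -/
noncomputable def sub (N : IMLN X Λ) (u : N.V) : IMLN X Λ where
  V := {v : N.V // N.Reaches u v}
  fintypeV := @Subtype.fintype _ _ (Classical.decPred _) N.fintypeV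
  Arc a b := N.Arc a.1 b.1
  root := ⟨u, Relation.ReflTransGen.refl⟩
  leafLabel a := N.leafLabel a.1
  retLabel a := N.retLabel a.1

/-- Isomorphism of IMLNs up to a permutation of the leaf labels and of the
internal labels: an arc-preserving bijection relating the labels via `σX`, `σΛ`. -/
def IsomUpTo (σX : Equiv.Perm X) (σΛ : Equiv.Perm Λ) (N₁ N₂ : IMLN X Λ) : Prop :=
  ∃ f : N₁.V ≃ N₂.V,
    (∀ u v : N₁.V, N₁.Arc u v ↔ N₂.Arc (f u) (f v)) ∧
    (∀ v : N₁.V, N₁.IsLeaf v → N₁.leafLabel v = σX (N₂.leafLabel (f v))) ∧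
    (∀ v : N₁.V, N₁.IsRet v ∨ N₁.IsElem v → N₁.retLabel v = σΛ (N₂.retLabel (f v)))

/-- Isomorphism of IMLNs: an arc-preserving bijection preserving leaf labels and
the labels of reticulation and elementary nodes. -/
def Isom (N₁ N₂ : IMLN X Λ) : Prop := IsomUpTo (Equiv.refl X) (Equiv.refl Λ) N₁ N₂

/-- `N'` is the unfolded IMLN `U(N,u)` of `N` at `u`: the arcs from the two parents
`v₁, v₂` of `u` to `u` are deleted, the subnetwork rooted at `u` is duplicated with
all its labels (`g` embeds `N` itself, `g'` embeds the new copy of the subnetwork),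
and arcs from `v₁` to one copy of `u` and from `v₂` to the other copy are added. -/
def IsUnfoldAt (N N' : IMLN X Λ) (u : N.V) : Prop :=
  ∃ g g' : N.V → N'.V,
    Function.Injective g ∧
    (∀ a b : N.V, N.Reaches u a → N.Reaches u b → g' a = g' b → a = b) ∧
    (∀ a b : N.V, N.Reaches u b → g a ≠ g' b) ∧
    (∀ x : N'.V, (∃ a, x = g a) ∨ (∃ a, N.Reaches u a ∧ x = g' a)) ∧
    g N.root = N'.root ∧
    (∀ a : N.V, N'.leafLabel (g a) = N.leafLabel a) ∧
    (∀ a : N.V, N'.retLabel (g a) = N.retLabel a) ∧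
    (∀ a : N.V, N.Reaches u a → N'.leafLabel (g' a) = N.leafLabel a) ∧
    (∀ a : N.V, N.Reaches u a → N'.retLabel (g' a) = N.retLabel a) ∧
    ∃ v₁ v₂ : N.V, v₁ ≠ v₂ ∧ N.Arc v₁ u ∧ N.Arc v₂ u ∧
      ∀ x y : N'.V, N'.Arc x y ↔
        ((∃ a b : N.V, N.Arc a b ∧ b ≠ u ∧ x = g a ∧ y = g b) ∨
         (∃ a b : N.V, N.Reaches u a ∧ N.Reaches u b ∧ N.Arc a b ∧ x = g' a ∧ y = g' b) ∨
         (x = g v₁ ∧ y = g u) ∨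
         (x = g v₂ ∧ y = g' u))

/-- One unfolding step, performed at the (necessarily unique) reticulation node
of `N` labelled `l`, which is required to lie in `R_min(N)`. -/
def UnfoldStep (N N' : IMLN X Λ) (l : Λ) : Prop :=
  ∃ u : N.V, N.IsMinRet u ∧ N.retLabel u = l ∧ IsUnfoldAt N N' u

/-- `IsUnfoldSeq N ls M`: `M` is obtained from `N` by the sequence of unfoldings at
the reticulation nodes labelled by the list `ls` (each minimal at its turn);
this encodes the notion of a compatible sequence and its associated sequence of IMLNs. -/
inductive IsUnfoldSeq : IMLN X Λ → List Λ → IMLN X Λ → Prop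
  | nil (N : IMLN X Λ) : IsUnfoldSeq N [] N
  | cons {N M M' : IMLN X Λ} {l : Λ} {ls : List Λ} :
      UnfoldStep N M l → IsUnfoldSeq M ls M' → IsUnfoldSeq N (l :: ls) M'

/-- A list of reticulation nodes of `N` is a compatible sequence if the associated
sequence of unfoldings exists. -/
def Compatible (N : IMLN X Λ) (us : List N.V) : Prop :=
  (∀ u ∈ us, N.IsRet u) ∧ ∃ M : IMLN X Λ, IsUnfoldSeq N (us.map N.retLabel) M

/-- The order `≤_E` on elementary nodes: `a ≤_E b` iff there are elementary nodes
`a', b'` with the same labels as `a, b` and a directed path from `b` to `a`. -/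
def LE_E (N : IMLN X Λ) (a b : N.V) : Prop :=
  N.IsElem a ∧ N.IsElem b ∧
    ∃ a' b' : N.V, N.IsElem a' ∧ N.IsElem b' ∧
      N.retLabel a' = N.retLabel a ∧ N.retLabel b' = N.retLabel b ∧ N.Reaches b a

/-- `a ∈ E_max(N)`: a maximal elementary node under `≤_E`. -/
def IsEMax (N : IMLN X Λ) (a : N.V) : Prop :=
  N.IsElem a ∧ ∀ b : N.V, N.LE_E a b → b = a

/-- `N'` is the folded IMLN `F(N,u)` of `N` at `u ∈ E_max(N)`: choosing the other
node `v ∈ E_max(N)` with the same label and isomorphic rooted subnetwork, the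
subnetwork rooted at `v` and the arc from the parent `vp` of `v` to `v` are deleted
and the arc `(vp, u)` is added. -/
def IsFoldAt (N N' : IMLN X Λ) (u : N.V) : Prop :=
  N.IsEMax u ∧
  ∃ v : N.V, v ≠ u ∧ N.IsEMax v ∧ N.retLabel v = N.retLabel u ∧
    Isom (N.sub u) (N.sub v) ∧
    ∃ vp : N.V, N.Arc vp v ∧
      ∃ h : N'.V → N.V,
        Function.Injective h ∧
        (∀ x : N'.V, ¬ N.Reaches v (h x)) ∧
        (∀ a : N.V, ¬ N.Reaches v a → ∃ x, h x = a) ∧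
        h N'.root = N.root ∧
        (∀ x : N'.V, N'.leafLabel x = N.leafLabel (h x)) ∧
        (∀ x : N'.V, N'.retLabel x = N.retLabel (h x)) ∧
        (∀ x y : N'.V, N'.Arc x y ↔ (N.Arc (h x) (h y) ∨ (h x = vp ∧ h y = u)))

/-- `IsFoldSeq N ls M`: `M` is obtained from `N` by successively folding at nodes
carrying the labels in the list `ls`. -/
inductive IsFoldSeq : IMLN X Λ → List Λ → IMLN X Λ → Prop
  | nil (N : IMLN X Λ) : IsFoldSeq N [] N
  | cons {N M M' : IMLN X Λ} {l : Λ} {ls : List Λ} :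
      (∃ u : N.V, N.retLabel u = l ∧ IsFoldAt N M u) → IsFoldSeq M ls M' →
      IsFoldSeq N (l :: ls) M'

/-- Pseudo-network condition (i): no reticulation node descends from an elementary node. -/
def PseudoCondI (N : IMLN X Λ) : Prop :=
  ∀ e r : N.V, N.IsElem e → N.IsRet r → ¬ N.Reaches e r

/-- Pseudo-network condition (ii): every node of `E_max(N)` has a mate with the
same label and isomorphic rooted subnetwork. -/
def PseudoCondII (N : IMLN X Λ) : Prop :=
  ∀ u : N.V, N.IsEMax u → ∃ v : N.V, v ≠ u ∧ N.IsEMax v ∧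
    N.retLabel v = N.retLabel u ∧ Isom (N.sub u) (N.sub v)

/-- Fuelled version of the recursive definition of pseudo-networks. -/
def IsPseudoN : ℕ → IMLN X Λ → Prop
  | 0, N => PseudoCondI N ∧ PseudoCondII N
  | n + 1, N => PseudoCondI N ∧ PseudoCondII N ∧
      ∀ (u : N.V) (N' : IMLN X Λ), N.IsEMax u → IsFoldAt N N' u → IsPseudoN n N'

/-- `N` is a pseudo-network: conditions (i) and (ii) hold, and every folding at a
node of `E_max(N)` yields again a pseudo-network. -/
def IsPseudo (N : IMLN X Λ) : Prop := ∀ n : ℕ, IsPseudoN n N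

/-- The polynomial ring `ℤ[x₁,…,xₙ,λ₁,…,λᵣ,y]`, with one variable for each leaf
label, one for each internal label, and one extra variable `y`. -/
abbrev PolyRing (X Λ : Type) := MvPolynomial (X ⊕ (Λ ⊕ Unit)) ℤ

/-- The variable `x_i`. -/
noncomputable def xVar (x : X) : PolyRing X Λ := MvPolynomial.X (Sum.inl x)

/-- The variable `λ_i`. -/
noncomputable def lVar (l : Λ) : PolyRing X Λ := MvPolynomial.X (Sum.inr (Sum.inl l))

/-- The variable `y`. -/
noncomputable def yVar : PolyRing X Λ := MvPolynomial.X (Sum.inr (Sum.inr ()))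

/-- `P` is the polynomial assignment `p` on the nodes of `N`:
`p(u) = φ(u)` on leaves, `p(u) = y + p(v₁)p(v₂)` on internal tree nodes with
children `v₁ ≠ v₂`, and `p(u) = ℓ(u)·p(v)` on nodes with a single child `v`. -/
def IsPolyAssignment (N : IMLN X Λ) (P : N.V → PolyRing X Λ) : Prop :=
  (∀ v : N.V, N.IsLeaf v → P v = xVar (N.leafLabel v)) ∧
  (∀ v v₁ v₂ : N.V, v₁ ≠ v₂ → N.Arc v v₁ → N.Arc v v₂ →
      P v = yVar + P v₁ * P v₂) ∧
  (∀ v w : N.V, N.outDeg v = 1 → N.Arc v w →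
      P v = lVar (N.retLabel v) * P w)

/-- The action `σ·p` of a permutation of the labels (fixing `X` and `Λ` setwise,
and fixing `y`) on polynomials, by renaming variables. -/
noncomputable def permRename (σX : Equiv.Perm X) (σΛ : Equiv.Perm Λ) (p : PolyRing X Λ) : PolyRing X Λ :=
  MvPolynomial.rename (Sum.map (⇑σX) (Sum.map (⇑σΛ) id)) p

/-- A strong path: a directed path all of whose intermediate nodes are elementary
or reticulation nodes.  `StrongReach N u v` says that `u` is a strong ancestor of
`v` (equivalently, `v` is a strong descendant of `u`). -/
inductive StrongReach (N : IMLN X Λ) : N.V → N.V → Prop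
  | refl (u : N.V) : StrongReach N u u
  | single {u v : N.V} : N.Arc u v → StrongReach N u v
  | cons {u w v : N.V} : N.Arc u w → (N.IsElem w ∨ N.IsRet w) →
      StrongReach N w v → StrongReach N u v

/-- `N₁` and `N₂` are equivalent modulo strong paths, with respect to the label
permutation `(σX, σΛ)` and polynomial assignments `P₁`, `P₂`:
(i) `p(N₁) = σ·p(N₂)`; (ii) there is a bijection `f` between the tree nodes
preserving strong descendance; (iii) `p(u) = σ·p(f(u))` for every tree node `u`. -/
def EquivModSP (N₁ N₂ : IMLN X Λ) (P₁ : N₁.V → PolyRing X Λ) (P₂ : N₂.V → PolyRing X Λ)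
    (σX : Equiv.Perm X) (σΛ : Equiv.Perm Λ) : Prop :=
  P₁ N₁.root = permRename σX σΛ (P₂ N₂.root) ∧
  ∃ f : {v : N₁.V // N₁.IsTreeNode v} ≃ {v : N₂.V // N₂.IsTreeNode v},
    (∀ u v : {v : N₁.V // N₁.IsTreeNode v},
        StrongReach N₁ u.1 v.1 → StrongReach N₂ (f u).1 (f v).1) ∧
    (∀ u : {v : N₁.V // N₁.IsTreeNode v}, P₁ u.1 = permRename σX σΛ (P₂ (f u).1))

/-- A tree node `u` is separable if either both of its children are tree nodes, or
some tree node `u₁ ≠ u` is a strong ancestor of one child `c` of `u` and either is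
a strong ancestor of no other strong descendant of `u`, or is also a strong
ancestor of one of the strong descendants of `c`. -/
def IsSeparableNode (N : IMLN X Λ) (u : N.V) : Prop :=
  N.IsTreeNode u → ∀ v₁ v₂ : N.V, v₁ ≠ v₂ → N.Arc u v₁ → N.Arc u v₂ →
    ((N.IsTreeNode v₁ ∧ N.IsTreeNode v₂) ∨
      ∃ u₁ : N.V, u₁ ≠ u ∧ N.IsTreeNode u₁ ∧
        ∃ c : N.V, (c = v₁ ∨ c = v₂) ∧ StrongReach N u₁ c ∧
          ((∀ w : N.V, StrongReach N u w → w ≠ c → ¬ StrongReach N u₁ w) ∨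
           (∃ w : N.V, w ≠ c ∧ StrongReach N c w ∧ StrongReach N u₁ w)))

/-- A network is separable if all its tree nodes are separable. -/
def IsSeparable (N : IMLN X Λ) : Prop := ∀ u : N.V, N.IsSeparableNode u

/-- A (rooted binary) phylogenetic network: an IMLN with no elementary nodes, root
of out-degree two, and bijective leaf labelling (internal labels are ignored). -/
def IsPhyloNet (N : IMLN X Λ) : Prop :=
  N.IsIMLN ∧ (∀ v : N.V, ¬ N.IsElem v) ∧ N.outDeg N.root = 2 ∧
    (∀ x : X, ∃! v : N.V, N.IsLeaf v ∧ N.leafLabel v = x)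

/-- `N'` is obtained from `N` by a single cherry-reduction: either reducing a leaf
`b` of a cherry `{a,b}` (deleting `b` and suppressing the resulting elementary
node, the root moving to `a` if the common parent was the root), or cutting a
reticulated cherry `{a,b}` (deleting the arc `(p_a,p_b)` and suppressing the two
resulting elementary nodes). -/
def IsCherryReduce (N N' : IMLN X Λ) : Prop :=
  (∃ a b pa : N.V, a ≠ b ∧ N.IsLeaf a ∧ N.IsLeaf b ∧ N.Arc pa a ∧ N.Arc pa b ∧
    ∃ h : N'.V → N.V,
      Function.Injective h ∧
      (∀ x : N'.V, h x ≠ b ∧ h x ≠ pa) ∧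
      (∀ c : N.V, c ≠ b → c ≠ pa → ∃ x, h x = c) ∧
      (∀ x : N'.V, N'.leafLabel x = N.leafLabel (h x)) ∧
      ((pa = N.root ∧ h N'.root = a) ∨ (pa ≠ N.root ∧ h N'.root = N.root)) ∧
      (∀ x y : N'.V, N'.Arc x y ↔
        (N.Arc (h x) (h y) ∨ (N.Arc (h x) pa ∧ h y = a)))) ∨
  (∃ a b pa pb : N.V, a ≠ b ∧ N.IsLeaf a ∧ N.IsLeaf b ∧ N.Arc pa a ∧ N.Arc pb b ∧
    N.IsRet pb ∧ N.Arc pa pb ∧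
    ∃ h : N'.V → N.V,
      Function.Injective h ∧
      (∀ x : N'.V, h x ≠ pa ∧ h x ≠ pb) ∧
      (∀ c : N.V, c ≠ pa → c ≠ pb → ∃ x, h x = c) ∧
      (∀ x : N'.V, N'.leafLabel x = N.leafLabel (h x)) ∧
      ((pa = N.root ∧ h N'.root = a) ∨ (pa ≠ N.root ∧ h N'.root = N.root)) ∧
      (∀ x y : N'.V, N'.Arc x y ↔
        (N.Arc (h x) (h y) ∨ (N.Arc (h x) pa ∧ h y = a) ∨ (N.Arc (h x) pb ∧ h y = b))))

/-- A network is orchard if some sequence of cherry-reductions reduces it to a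
single vertex. -/
inductive IsOrchard : IMLN X Λ → Prop
  | single (N : IMLN X Λ) : (∀ v : N.V, v = N.root) → IsOrchard N
  | step {N N' : IMLN X Λ} : IsCherryReduce N N' → IsOrchard N' → IsOrchard N

/-- `ArcPath N u v n`: there is a directed path of length `n` from `u` to `v`. -/
inductive ArcPath (N : IMLN X Λ) : N.V → N.V → ℕ → Prop
  | refl (u : N.V) : ArcPath N u u 0
  | step {u w v : N.V} {n : ℕ} : N.Arc u w → ArcPath N w v n → ArcPath N u v (n + 1)

end IMLN

/-!
Both orders of unfolding give, up to isomorphism, the network `doubleUnfold`: `N` together with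
second copies of `N(u₁)` and `N(u₂)`, each subtree inside `N` hanging below one parent of its
root and its copy below the other. By minimality, `N(u₁)` and `N(u₂)` are disjoint and every
node of them other than the root has its only parent inside the subtree, so unfolding at `u₁`
leaves `N(u₂)` intact and its root the only reticulation with the label of `u₂`. Which parent of
`u₂` keeps the original subtree may differ between the two orders; exchanging the subtree with
its copy (`swapCopies`) is an isomorphism that absorbs this choice.
-/

namespace IMLN

variable {X Λ : Type} {N : IMLN X Λ}

section Graph

variable {u w a b : N.V}

theorem inDeg_le_one_iff : N.inDeg b ≤ 1 ↔ ∀ a, N.Arc a b → ∀ c, N.Arc c b → a = c := by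
  have := N.fintypeV
  exact Set.ncard_le_one (s := {a | N.Arc a b})

theorem IsRet.eq_or_eq_of_arc {p₁ p₂ : N.V} (hu : N.IsRet u) (hp : p₁ ≠ p₂)
    (hp₁ : N.Arc p₁ u) (hp₂ : N.Arc p₂ u) (ha : N.Arc a u) : a = p₁ ∨ a = p₂ := by
  have := N.fintypeV
  have hsub : ({p₁, p₂} : Set N.V) ⊆ {x | N.Arc x u} := by
    rintro x (rfl | rfl)
    exacts [hp₁, hp₂]
  have hpar := Set.eq_of_subset_of_ncard_le hsub (by rw [Set.ncard_pair hp]; exact hu.1.le)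
  have ha' : a ∈ ({p₁, p₂} : Set N.V) := hpar ▸ ha
  simpa using ha'

theorem IsIMLN.not_arc_of_reaches (hN : N.IsIMLN) (h : N.Reaches b a) : ¬ N.Arc a b :=
  fun h' => hN.acyclic b (Relation.TransGen.tail' h h')

theorem IsIMLN.inDeg_le_one_or_isRet (hN : N.IsIMLN) (v : N.V) : N.inDeg v ≤ 1 ∨ N.IsRet v := by
  by_cases hv : v = N.root
  · rw [hv, hN.rootIn]
    exact Or.inl zero_le_one
  · rcases hN.degrees v hv with ⟨h, -⟩ | h
    exacts [Or.inl h.le, Or.inr h]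

theorem IsMinRet.not_reaches_of_isRet (hu : N.IsMinRet u) (hw : N.IsRet w) (hne : w ≠ u) :
    ¬ N.Reaches u w :=
  fun h => hne (hu.2 w hw h)

theorem IsMinRet.inDeg_le_one (hN : N.IsIMLN) (hu : N.IsMinRet u) (hb : N.Reaches u b)
    (hne : b ≠ u) : N.inDeg b ≤ 1 :=
  (hN.inDeg_le_one_or_isRet b).resolve_right fun h => hu.not_reaches_of_isRet h hne hb

theorem IsMinRet.reaches_of_arc (hN : N.IsIMLN) (hu : N.IsMinRet u) (hb : N.Reaches u b)
    (hne : b ≠ u) (hab : N.Arc a b) : N.Reaches u a := by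
  obtain rfl | ⟨c, hc, hcb⟩ := hb.cases_tail
  · exact absurd rfl hne
  · rwa [inDeg_le_one_iff.1 (hu.inDeg_le_one hN hb hne) a hab c hcb]

end Graph

/-- `IsUnfoldAt N A u` with its witnesses fixed; below, `g` is called the map and `g'` the copy. -/
structure IsUnfoldVia (N A : IMLN X Λ) (u : N.V) (g g' : N.V → A.V) (v₁ v₂ : N.V) : Prop where
  injective : Function.Injective g
  copy_injOn : ∀ a b, N.Reaches u a → N.Reaches u b → g' a = g' b → a = b
  map_ne_copy : ∀ a b, N.Reaches u b → g a ≠ g' b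
  cover : ∀ x : A.V, (∃ a, x = g a) ∨ (∃ a, N.Reaches u a ∧ x = g' a)
  map_root : g N.root = A.root
  leafLabel_map : ∀ a, A.leafLabel (g a) = N.leafLabel a
  retLabel_map : ∀ a, A.retLabel (g a) = N.retLabel a
  leafLabel_copy : ∀ a, N.Reaches u a → A.leafLabel (g' a) = N.leafLabel a
  retLabel_copy : ∀ a, N.Reaches u a → A.retLabel (g' a) = N.retLabel a
  parents_ne : v₁ ≠ v₂
  arc₁ : N.Arc v₁ u
  arc₂ : N.Arc v₂ u
  arc_iff : ∀ x y : A.V, A.Arc x y ↔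
    ((∃ a b : N.V, N.Arc a b ∧ b ≠ u ∧ x = g a ∧ y = g b) ∨
     (∃ a b : N.V, N.Reaches u a ∧ N.Reaches u b ∧ N.Arc a b ∧ x = g' a ∧ y = g' b) ∨
     (x = g v₁ ∧ y = g u) ∨
     (x = g v₂ ∧ y = g' u))

theorem IsUnfoldAt.exists_isUnfoldVia {A : IMLN X Λ} {u : N.V} (hA : IsUnfoldAt N A u) :
    ∃ g g' v₁ v₂, IsUnfoldVia N A u g g' v₁ v₂ := by
  obtain ⟨g, g', h₁, h₂, h₃, h₄, h₅, h₆, h₇, h₈, h₉, v₁, v₂, h₁₀, h₁₁, h₁₂, h₁₃⟩ := hA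
  exact ⟨g, g', v₁, v₂, ⟨h₁, h₂, h₃, h₄, h₅, h₆, h₇, h₈, h₉, h₁₀, h₁₁, h₁₂, h₁₃⟩⟩

namespace IsUnfoldVia

variable {A : IMLN X Λ} {u v₁ v₂ a b : N.V} {g g' : N.V → A.V}

theorem arc_map_map (hA : IsUnfoldVia N A u g g' v₁ v₂) :
    A.Arc (g a) (g b) ↔ (N.Arc a b ∧ b ≠ u) ∨ (a = v₁ ∧ b = u) := by
  rw [hA.arc_iff]
  constructor
  · rintro (⟨a', b', h, hb, ha', hb'⟩ | ⟨a', b', -, hb', -, -, hb''⟩ | ⟨ha, hb⟩ | ⟨-, hb⟩)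
    · rw [hA.injective ha', hA.injective hb']
      exact Or.inl ⟨h, hb⟩
    · exact absurd hb'' (hA.map_ne_copy b b' hb')
    · exact Or.inr ⟨hA.injective ha, hA.injective hb⟩
    · exact absurd hb (hA.map_ne_copy b u .refl)
  · rintro (⟨h, hb⟩ | ⟨rfl, rfl⟩)
    · exact Or.inl ⟨a, b, h, hb, rfl, rfl⟩
    · exact Or.inr (Or.inr (Or.inl ⟨rfl, rfl⟩))

theorem arc_map_copy (hA : IsUnfoldVia N A u g g' v₁ v₂) (hb : N.Reaches u b) :
    A.Arc (g a) (g' b) ↔ a = v₂ ∧ b = u := by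
  rw [hA.arc_iff]
  constructor
  · rintro (⟨-, b', -, -, -, hb'⟩ | ⟨a', -, ha', -, -, ha, -⟩ | ⟨-, hb'⟩ | ⟨ha, hb'⟩)
    · exact absurd hb'.symm (hA.map_ne_copy b' b hb)
    · exact absurd ha (hA.map_ne_copy a a' ha')
    · exact absurd hb'.symm (hA.map_ne_copy u b hb)
    · exact ⟨hA.injective ha, hA.copy_injOn b u hb .refl hb'⟩
  · rintro ⟨rfl, rfl⟩
    exact Or.inr (Or.inr (Or.inr ⟨rfl, rfl⟩))

theorem arc_copy_copy (hA : IsUnfoldVia N A u g g' v₁ v₂) (ha : N.Reaches u a)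
    (hb : N.Reaches u b) : A.Arc (g' a) (g' b) ↔ N.Arc a b := by
  rw [hA.arc_iff]
  constructor
  · rintro (⟨a', -, -, -, ha', -⟩ | ⟨a', b', ha', hb', h, ha'', hb''⟩ | ⟨ha', -⟩ | ⟨ha', -⟩)
    · exact absurd ha'.symm (hA.map_ne_copy a' a ha)
    · rwa [hA.copy_injOn a a' ha ha' ha'', hA.copy_injOn b b' hb hb' hb'']
    · exact absurd ha'.symm (hA.map_ne_copy v₁ a ha)
    · exact absurd ha'.symm (hA.map_ne_copy v₂ a ha)
  · intro h
    exact Or.inr (Or.inl ⟨a, b, ha, hb, h, rfl, rfl⟩)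

theorem not_arc_copy_map (hA : IsUnfoldVia N A u g g' v₁ v₂) (ha : N.Reaches u a) :
    ¬ A.Arc (g' a) (g b) := by
  rw [hA.arc_iff]
  rintro (⟨a', -, -, -, ha', -⟩ | ⟨-, b', -, hb', -, -, hb⟩ | ⟨ha', -⟩ | ⟨-, hb⟩)
  · exact hA.map_ne_copy a' a ha ha'.symm
  · exact hA.map_ne_copy b b' hb' hb
  · exact hA.map_ne_copy v₁ a ha ha'.symm
  · exact hA.map_ne_copy b u .refl hb

theorem exists_eq_map_of_arc (hA : IsUnfoldVia N A u g g' v₁ v₂) (hb : b ≠ u) {x : A.V}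
    (hx : A.Arc x (g b)) : ∃ a, N.Arc a b ∧ x = g a := by
  rcases hA.cover x with ⟨a, rfl⟩ | ⟨a, ha, rfl⟩
  · exact ⟨a, ((hA.arc_map_map.1 hx).resolve_right fun h => hb h.2).1, rfl⟩
  · exact absurd hx (hA.not_arc_copy_map ha)

theorem inDeg_map (hA : IsUnfoldVia N A u g g' v₁ v₂) (hb : b ≠ u) :
    A.inDeg (g b) = N.inDeg b := by
  have hpar : {x | A.Arc x (g b)} = g '' {a | N.Arc a b} := by
    ext x
    constructor
    · intro hx
      obtain ⟨a, ha, rfl⟩ := hA.exists_eq_map_of_arc hb hx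
      exact ⟨a, ha, rfl⟩
    · rintro ⟨a, ha, rfl⟩
      exact hA.arc_map_map.2 (Or.inl ⟨ha, hb⟩)
  rw [inDeg, hpar, Set.ncard_image_of_injective _ hA.injective, inDeg]

theorem inDeg_map_self_le (hA : IsUnfoldVia N A u g g' v₁ v₂) : A.inDeg (g u) ≤ 1 := by
  have hpar : ∀ x, A.Arc x (g u) → x = g v₁ := by
    intro x hx
    rcases hA.cover x with ⟨a, rfl⟩ | ⟨a, ha, rfl⟩
    · rcases hA.arc_map_map.1 hx with ⟨-, h⟩ | ⟨rfl, -⟩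
      exacts [absurd rfl h, rfl]
    · exact absurd hx (hA.not_arc_copy_map ha)
  exact inDeg_le_one_iff.2 fun x hx y hy => (hpar x hx).trans (hpar y hy).symm

theorem inDeg_copy_le (hN : N.IsIMLN) (hu : N.IsMinRet u) (hA : IsUnfoldVia N A u g g' v₁ v₂)
    (hb : N.Reaches u b) : A.inDeg (g' b) ≤ 1 := by
  refine inDeg_le_one_iff.2 fun x hx y hy => ?_
  by_cases hbu : b = u
  · subst hbu
    have hpar : ∀ z, A.Arc z (g' b) → z = g v₂ := by
      intro z hz
      rcases hA.cover z with ⟨a, rfl⟩ | ⟨a, ha, rfl⟩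
      · rw [((hA.arc_map_copy hb).1 hz).1]
      · exact absurd ((hA.arc_copy_copy ha hb).1 hz) (hN.not_arc_of_reaches ha)
    rw [hpar x hx, hpar y hy]
  · have hpar : ∀ z, A.Arc z (g' b) → ∃ a, N.Arc a b ∧ z = g' a := by
      intro z hz
      rcases hA.cover z with ⟨a, rfl⟩ | ⟨a, ha, rfl⟩
      · exact absurd ((hA.arc_map_copy hb).1 hz).2 hbu
      · exact ⟨a, (hA.arc_copy_copy ha hb).1 hz, rfl⟩
    obtain ⟨a, ha, rfl⟩ := hpar x hx
    obtain ⟨c, hc, rfl⟩ := hpar y hy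
    rw [inDeg_le_one_iff.1 (hu.inDeg_le_one hN hb hbu) a ha c hc]

theorem exists_eq_map_of_isRet (hN : N.IsIMLN) (hu : N.IsMinRet u)
    (hA : IsUnfoldVia N A u g g' v₁ v₂) {x : A.V} (hx : A.IsRet x) :
    ∃ r, N.IsRet r ∧ r ≠ u ∧ x = g r := by
  have h2 := hx.1
  rcases hA.cover x with ⟨r, rfl⟩ | ⟨a, ha, rfl⟩
  · by_cases hr : r = u
    · have := hr ▸ hA.inDeg_map_self_le
      omega
    · rw [hA.inDeg_map hr] at h2
      exact ⟨r, (hN.inDeg_le_one_or_isRet r).resolve_left (by omega), hr, rfl⟩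
  · have := hA.inDeg_copy_le hN hu ha
    omega

theorem bijective_sumElim (hA : IsUnfoldVia N A u g g' v₁ v₂) :
    Function.Bijective (Sum.elim g fun a : {a // N.Reaches u a} => g' a) := by
  constructor
  · rintro (a | a) (b | b) h
    · exact congrArg Sum.inl (hA.injective h)
    · exact absurd h (hA.map_ne_copy a b b.2)
    · exact absurd h.symm (hA.map_ne_copy b a a.2)
    · exact congrArg Sum.inr (Subtype.ext (hA.copy_injOn a b a.2 b.2 h))
  · intro x
    rcases hA.cover x with ⟨a, rfl⟩ | ⟨a, ha, rfl⟩
    exacts [⟨.inl a, rfl⟩, ⟨.inr ⟨a, ha⟩, rfl⟩]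

variable {w : N.V}

theorem reaches_map_map (hA : IsUnfoldVia N A u g g' v₁ v₂) (hu : N.IsRet u)
    (hw : N.IsMinRet w) (hne : u ≠ w) (ha : N.Reaches w a) : A.Reaches (g w) (g a) := by
  induction ha with
  | refl => exact .refl
  | tail hb hbc ih =>
    exact ih.tail (hA.arc_map_map.2 (Or.inl ⟨hbc, fun h =>
      hw.not_reaches_of_isRet hu hne (h ▸ hb.tail hbc)⟩))

theorem exists_eq_map_of_reaches (hA : IsUnfoldVia N A u g g' v₁ v₂) (hu : N.IsRet u)
    (hw : N.IsMinRet w) (hne : u ≠ w) {x : A.V} (hx : A.Reaches (g w) x) :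
    ∃ a, N.Reaches w a ∧ x = g a := by
  induction hx with
  | refl => exact ⟨w, .refl, rfl⟩
  | @tail y z _ hyz ih =>
    obtain ⟨a, ha, rfl⟩ := ih
    have hpar : ∀ v, N.Arc v u → a ≠ v := fun v hv h =>
      hw.not_reaches_of_isRet hu hne ((h ▸ ha).tail hv)
    rcases hA.cover z with ⟨b, rfl⟩ | ⟨b, hb, rfl⟩
    · rcases hA.arc_map_map.1 hyz with ⟨h, -⟩ | ⟨h, -⟩
      exacts [⟨b, ha.tail h, rfl⟩, absurd h (hpar v₁ hA.arc₁)]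
    · exact absurd ((hA.arc_map_copy hb).1 hyz).1 (hpar v₂ hA.arc₂)

end IsUnfoldVia

/-- An isomorphism of IMLNs that preserves the labels of every node; `Isom` only asks this at
leaves, reticulation and elementary nodes. -/
structure Iso (N₁ N₂ : IMLN X Λ) extends N₁.Arc ≃r N₂.Arc where
  leafLabel_apply : ∀ v, N₂.leafLabel (toFun v) = N₁.leafLabel v
  retLabel_apply : ∀ v, N₂.retLabel (toFun v) = N₁.retLabel v

namespace Iso

variable {N₁ N₂ N₃ : IMLN X Λ}

def refl (N : IMLN X Λ) : Iso N N :=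
  ⟨RelIso.refl _, fun _ => rfl, fun _ => rfl⟩

def symm (e : Iso N₁ N₂) : Iso N₂ N₁ where
  toRelIso := e.toRelIso.symm
  leafLabel_apply v := by
    rw [← e.leafLabel_apply]
    exact congrArg _ (e.toRelIso.apply_symm_apply v)
  retLabel_apply v := by
    rw [← e.retLabel_apply]
    exact congrArg _ (e.toRelIso.apply_symm_apply v)

def trans (e₁ : Iso N₁ N₂) (e₂ : Iso N₂ N₃) : Iso N₁ N₃ where
  toRelIso := e₁.toRelIso.trans e₂.toRelIso
  leafLabel_apply v := (e₂.leafLabel_apply _).trans (e₁.leafLabel_apply v)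
  retLabel_apply v := (e₂.retLabel_apply _).trans (e₁.retLabel_apply v)

theorem isom (e : Iso N₁ N₂) : Isom N₁ N₂ :=
  ⟨e.toEquiv, fun _ _ => e.map_rel_iff'.symm, fun v _ => (e.leafLabel_apply v).symm,
    fun v _ => (e.retLabel_apply v).symm⟩

end Iso

section DoubleUnfold

variable (N) (u₁ u₂ v₁ v₂ p₁ p₂ : N.V)

abbrev DoubleV : Type := (N.V ⊕ {a // N.Reaches u₁ a}) ⊕ {a // N.Reaches u₂ a}

def doubleProj : DoubleV N u₁ u₂ → N.V :=
  Sum.elim (Sum.elim id Subtype.val) Subtype.val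

/-- On `(N ⊕ N(u₁)) ⊕ N(u₂)`: the subtrees `N(u₁)`, `N(u₂)` inside `N` hang below `v₁` and `p₁`,
their second copies below `v₂` and `p₂`. -/
def doubleArc : DoubleV N u₁ u₂ → DoubleV N u₁ u₂ → Prop
  | .inl (.inl a), .inl (.inl b) =>
      (N.Arc a b ∧ b ≠ u₁ ∧ b ≠ u₂) ∨ (a = v₁ ∧ b = u₁) ∨ (a = p₁ ∧ b = u₂)
  | .inl (.inl a), .inl (.inr b) => a = v₂ ∧ b.1 = u₁
  | .inl (.inl a), .inr b => a = p₂ ∧ b.1 = u₂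
  | .inl (.inr a), .inl (.inr b) => N.Arc a.1 b.1
  | .inr a, .inr b => N.Arc a.1 b.1
  | _, _ => False

/-- The IMLN obtained from `N` by unfolding at `u₁` (parents `v₁`, `v₂`) and at `u₂`
(parents `p₁`, `p₂`). -/
noncomputable def doubleUnfold : IMLN X Λ where
  V := DoubleV N u₁ u₂
  fintypeV := by
    classical
    have := N.fintypeV
    infer_instance
  Arc := doubleArc N u₁ u₂ v₁ v₂ p₁ p₂
  root := .inl (.inl N.root)
  leafLabel x := N.leafLabel (doubleProj N u₁ u₂ x)
  retLabel x := N.retLabel (doubleProj N u₁ u₂ x)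

def doubleVComm : DoubleV N u₁ u₂ → DoubleV N u₂ u₁
  | .inl (.inl a) => .inl (.inl a)
  | .inl (.inr a) => .inr a
  | .inr a => .inl (.inr a)

def doubleUnfoldComm :
    Iso (doubleUnfold N u₁ u₂ v₁ v₂ p₁ p₂) (doubleUnfold N u₂ u₁ p₁ p₂ v₁ v₂) where
  toFun := doubleVComm N u₁ u₂
  invFun := doubleVComm N u₂ u₁
  left_inv := by rintro ((a | a) | a) <;> rfl
  right_inv := by rintro ((a | a) | a) <;> rfl
  map_rel_iff' := by
    intro x y
    change doubleArc N u₂ u₁ p₁ p₂ v₁ v₂ (doubleVComm N u₁ u₂ x) (doubleVComm N u₁ u₂ y) ↔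
      doubleArc N u₁ u₂ v₁ v₂ p₁ p₂ x y
    rcases x with (a | a) | a <;> rcases y with (b | b) | b <;> simp only [doubleVComm, doubleArc]
    tauto
  leafLabel_apply := by rintro ((a | a) | a) <;> rfl
  retLabel_apply := by rintro ((a | a) | a) <;> rfl

end DoubleUnfold

section SwapCopies

variable {u₁ u₂ v₁ v₂ p₁ p₂ : N.V}

open Classical in
noncomputable def swapCopies (N : IMLN X Λ) (u₁ u₂ : N.V) : DoubleV N u₁ u₂ → DoubleV N u₁ u₂
  | .inl (.inl a) => if h : N.Reaches u₂ a then .inr ⟨a, h⟩ else .inl (.inl a)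
  | .inl (.inr a) => .inl (.inr a)
  | .inr a => .inl (.inl a.1)

theorem swapCopies_involutive : Function.Involutive (swapCopies N u₁ u₂) := by
  rintro ((a | a) | a)
  · by_cases h : N.Reaches u₂ a <;> simp [swapCopies, h]
  · rfl
  · simp [swapCopies, a.2]

theorem doubleProj_swapCopies (x : DoubleV N u₁ u₂) :
    doubleProj N u₁ u₂ (swapCopies N u₁ u₂ x) = doubleProj N u₁ u₂ x := by
  rcases x with (a | a) | a
  · by_cases h : N.Reaches u₂ a <;> simp [swapCopies, doubleProj, h]
  all_goals rfl

theorem doubleArc_swapCopies (hN : N.IsIMLN) (h₁ : N.IsRet u₁) (h₂ : N.IsMinRet u₂)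
    (hne : u₁ ≠ u₂) (hv₁ : N.Arc v₁ u₁) (hv₂ : N.Arc v₂ u₁) (hp₁ : N.Arc p₁ u₂)
    (hp₂ : N.Arc p₂ u₂) {x y : DoubleV N u₁ u₂} (h : doubleArc N u₁ u₂ v₁ v₂ p₁ p₂ x y) :
    doubleArc N u₁ u₂ v₁ v₂ p₂ p₁ (swapCopies N u₁ u₂ x) (swapCopies N u₁ u₂ y) := by
  have hu₁ : ¬ N.Reaches u₂ u₁ := h₂.not_reaches_of_isRet h₁ hne
  have hv : ∀ {v}, N.Arc v u₁ → ¬ N.Reaches u₂ v := fun hv h => hu₁ (h.tail hv)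
  have hp : ∀ {p}, N.Arc p u₂ → ¬ N.Reaches u₂ p := fun hp h => hN.not_arc_of_reaches h hp
  rcases x with (a | a) | a <;> rcases y with (b | b) | b <;> simp only [doubleArc] at h
  · rcases h with ⟨hab, hb₁, hb₂⟩ | ⟨rfl, rfl⟩ | ⟨ha, hb⟩
    · by_cases ha : N.Reaches u₂ a
      · have hb : N.Reaches u₂ b := ha.tail hab
        simp [swapCopies, doubleArc, ha, hb, hab]
      · have hb : ¬ N.Reaches u₂ b := fun hb => ha (h₂.reaches_of_arc hN hb hb₂ hab)
        simp [swapCopies, doubleArc, ha, hb, hab, hb₁, hb₂]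
    · simp [swapCopies, doubleArc, hv hv₁, hu₁]
    · rw [ha, hb]
      simp [swapCopies, doubleArc, hp hp₁, show N.Reaches u₂ u₂ from .refl]
  · obtain ⟨rfl, hb⟩ := h
    simp [swapCopies, doubleArc, hv hv₂, hb]
  · obtain ⟨rfl, hb⟩ := h
    simp [swapCopies, doubleArc, hp hp₂, hb]
  · exact h
  · simp only [swapCopies, doubleArc]
    exact Or.inl ⟨h, fun hb => hu₁ (hb ▸ b.2 : N.Reaches u₂ u₁),
      fun hb => hN.not_arc_of_reaches ((congrArg (N.Reaches · a.1) hb).mpr a.2) h⟩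

noncomputable def swapCopiesIso (hN : N.IsIMLN) (h₁ : N.IsRet u₁) (h₂ : N.IsMinRet u₂)
    (hne : u₁ ≠ u₂) (hv₁ : N.Arc v₁ u₁) (hv₂ : N.Arc v₂ u₁) (hp₁ : N.Arc p₁ u₂)
    (hp₂ : N.Arc p₂ u₂) :
    Iso (doubleUnfold N u₁ u₂ v₁ v₂ p₁ p₂) (doubleUnfold N u₁ u₂ v₁ v₂ p₂ p₁) where
  toEquiv := swapCopies_involutive.toPerm _
  map_rel_iff' := by
    intro x y
    refine ⟨fun h => ?_, doubleArc_swapCopies hN h₁ h₂ hne hv₁ hv₂ hp₁ hp₂⟩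
    have h' := doubleArc_swapCopies hN h₁ h₂ hne hv₁ hv₂ hp₂ hp₁
      (x := swapCopies N u₁ u₂ x) (y := swapCopies N u₁ u₂ y) h
    rwa [swapCopies_involutive x, swapCopies_involutive y] at h'
  leafLabel_apply x := congrArg N.leafLabel (doubleProj_swapCopies x)
  retLabel_apply x := congrArg N.retLabel (doubleProj_swapCopies x)

theorem nonempty_iso_doubleUnfold_of_parents (hN : N.IsIMLN) (h₁ : N.IsRet u₁)
    (h₂ : N.IsMinRet u₂) (hne : u₁ ≠ u₂) (hv₁ : N.Arc v₁ u₁) (hv₂ : N.Arc v₂ u₁)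
    (hp : p₁ ≠ p₂) (hp₁ : N.Arc p₁ u₂) (hp₂ : N.Arc p₂ u₂) {q₁ q₂ : N.V} (hq : q₁ ≠ q₂)
    (hq₁ : N.Arc q₁ u₂) (hq₂ : N.Arc q₂ u₂) :
    Nonempty (Iso (doubleUnfold N u₁ u₂ v₁ v₂ p₁ p₂) (doubleUnfold N u₁ u₂ v₁ v₂ q₁ q₂)) := by
  rcases h₂.1.eq_or_eq_of_arc hp hp₁ hp₂ hq₁ with rfl | rfl <;>
    rcases h₂.1.eq_or_eq_of_arc hp hp₁ hp₂ hq₂ with rfl | rfl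
  · exact absurd rfl hq
  · exact ⟨Iso.refl _⟩
  · exact ⟨swapCopiesIso hN h₁ h₂ hne hv₁ hv₂ hp₁ hp₂⟩
  · exact absurd rfl hq

end SwapCopies

section DoubleMap

variable {A B : IMLN X Λ} {u₁ u₂ v₁ v₂ p₁ p₂ : N.V} {g g' : N.V → A.V} {k k' : A.V → B.V}

def doubleMap (u₁ u₂ : N.V) (g g' : N.V → A.V) (k k' : A.V → B.V) : DoubleV N u₁ u₂ → B.V
  | .inl (.inl a) => k (g a)
  | .inl (.inr a) => k (g' a)
  | .inr a => k' (g a)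

theorem bijective_doubleMap (h₁ : N.IsRet u₁) (h₂ : N.IsMinRet u₂) (hne : u₁ ≠ u₂)
    (hA : IsUnfoldVia N A u₁ g g' v₁ v₂) (hB : IsUnfoldVia A B (g u₂) k k' (g p₁) (g p₂)) :
    Function.Bijective (doubleMap u₁ u₂ g g' k k') := by
  let φ (a : {a // N.Reaches u₂ a}) : {x // A.Reaches (g u₂) x} :=
    ⟨g a, hA.reaches_map_map h₁ h₂ hne a.2⟩
  have hφ : Function.Bijective φ := by
    refine ⟨fun a b h => Subtype.ext (hA.injective (congrArg Subtype.val h)), fun x => ?_⟩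
    obtain ⟨a, ha, hx⟩ := hA.exists_eq_map_of_reaches h₁ h₂ hne x.2
    exact ⟨⟨a, ha⟩, Subtype.ext hx.symm⟩
  convert hB.bijective_sumElim.comp (hA.bijective_sumElim.sumMap hφ) using 1
  funext x
  rcases x with (a | a) | a <;> rfl

theorem arc_doubleMap_iff (h₁ : N.IsRet u₁) (h₂ : N.IsMinRet u₂) (hne : u₁ ≠ u₂)
    (hA : IsUnfoldVia N A u₁ g g' v₁ v₂) (hB : IsUnfoldVia A B (g u₂) k k' (g p₁) (g p₂))
    (x y : DoubleV N u₁ u₂) :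
    B.Arc (doubleMap u₁ u₂ g g' k k' x) (doubleMap u₁ u₂ g g' k k' y) ↔
      doubleArc N u₁ u₂ v₁ v₂ p₁ p₂ x y := by
  have hS (a : {a // N.Reaches u₂ a}) : A.Reaches (g u₂) (g a) :=
    hA.reaches_map_map h₁ h₂ hne a.2
  have hu₁ (a : {a // N.Reaches u₂ a}) : a.1 ≠ u₁ := fun h =>
    h₂.not_reaches_of_isRet h₁ hne (h ▸ a.2)
  rcases x with (a | a) | a <;> rcases y with (b | b) | b <;> simp only [doubleMap, doubleArc]
  · simp only [hB.arc_map_map, hA.arc_map_map, ne_eq, hA.injective.eq_iff]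
    constructor
    · rintro (⟨⟨hab, hb₁⟩ | hv, hb₂⟩ | hp)
      exacts [Or.inl ⟨hab, hb₁, hb₂⟩, Or.inr (Or.inl hv), Or.inr (Or.inr hp)]
    · rintro (⟨hab, hb₁, hb₂⟩ | ⟨rfl, rfl⟩ | hp)
      exacts [Or.inl ⟨Or.inl ⟨hab, hb₁⟩, hb₂⟩, Or.inl ⟨Or.inr ⟨rfl, rfl⟩, hne⟩, Or.inr hp]
  · simp [hB.arc_map_map, hA.arc_map_copy b.2, (hA.map_ne_copy u₂ b b.2).symm]
  · rw [hB.arc_map_copy (hS b), hA.injective.eq_iff, hA.injective.eq_iff]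
  · simp [hB.arc_map_map, hA.not_arc_copy_map a.2, (hA.map_ne_copy p₁ a a.2).symm]
  · simp [hB.arc_map_map, hA.arc_copy_copy a.2 b.2, (hA.map_ne_copy u₂ b b.2).symm]
  · simp [hB.arc_map_copy (hS b), (hA.map_ne_copy p₂ a a.2).symm]
  · exact iff_false_intro (hB.not_arc_copy_map (hS a))
  · exact iff_false_intro (hB.not_arc_copy_map (hS a))
  · simp [hB.arc_copy_copy (hS a) (hS b), hA.arc_map_map, hu₁ b]

theorem IsUnfoldVia.nonempty_iso_doubleUnfold (h₁ : N.IsRet u₁) (h₂ : N.IsMinRet u₂)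
    (hne : u₁ ≠ u₂) (hA : IsUnfoldVia N A u₁ g g' v₁ v₂)
    (hB : IsUnfoldVia A B (g u₂) k k' (g p₁) (g p₂)) :
    Nonempty (Iso (doubleUnfold N u₁ u₂ v₁ v₂ p₁ p₂) B) := by
  have hS (a : {a // N.Reaches u₂ a}) : A.Reaches (g u₂) (g a) :=
    hA.reaches_map_map h₁ h₂ hne a.2
  refine ⟨{ toEquiv := Equiv.ofBijective _ (bijective_doubleMap h₁ h₂ hne hA hB)
            map_rel_iff' := arc_doubleMap_iff h₁ h₂ hne hA hB _ _
            leafLabel_apply := ?_, retLabel_apply := ?_ }⟩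
  · rintro ((a | a) | a)
    · exact (hB.leafLabel_map _).trans (hA.leafLabel_map a)
    · exact (hB.leafLabel_map _).trans (hA.leafLabel_copy a a.2)
    · exact (hB.leafLabel_copy _ (hS a)).trans (hA.leafLabel_map a)
  · rintro ((a | a) | a)
    · exact (hB.retLabel_map _).trans (hA.retLabel_map a)
    · exact (hB.retLabel_map _).trans (hA.retLabel_copy a a.2)
    · exact (hB.retLabel_copy _ (hS a)).trans (hA.retLabel_map a)

end DoubleMap

namespace IsUnfoldAt

variable {A B : IMLN X Λ} {u u₁ u₂ : N.V}

theorem not_unfoldStep_retLabel (hN : N.IsIMLN) (hu : N.IsMinRet u) (hA : IsUnfoldAt N A u) :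
    ¬ UnfoldStep A B (N.retLabel u) := by
  rintro ⟨x, hx, hxu, -⟩
  obtain ⟨g, g', v₁, v₂, hA⟩ := hA.exists_isUnfoldVia
  obtain ⟨r, hr, hru, rfl⟩ := hA.exists_eq_map_of_isRet hN hu hx.1
  exact hru (hN.retInj r u hr hu.1 (by rwa [hA.retLabel_map] at hxu))

theorem exists_iso_doubleUnfold (hN : N.IsIMLN) (h₁ : N.IsMinRet u₁) (h₂ : N.IsMinRet u₂)
    (hne : u₁ ≠ u₂) (hA : IsUnfoldAt N A u₁) (hB : UnfoldStep A B (N.retLabel u₂)) :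
    ∃ v₁ v₂ p₁ p₂, v₁ ≠ v₂ ∧ N.Arc v₁ u₁ ∧ N.Arc v₂ u₁ ∧ p₁ ≠ p₂ ∧ N.Arc p₁ u₂ ∧
      N.Arc p₂ u₂ ∧ Nonempty (Iso (doubleUnfold N u₁ u₂ v₁ v₂ p₁ p₂) B) := by
  obtain ⟨g, g', v₁, v₂, hA⟩ := hA.exists_isUnfoldVia
  obtain ⟨x, hx, hxu, hB⟩ := hB
  obtain ⟨k, k', w₁, w₂, hB⟩ := hB.exists_isUnfoldVia
  obtain ⟨r, hr, -, rfl⟩ := hA.exists_eq_map_of_isRet hN h₁ hx.1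
  obtain rfl : r = u₂ := hN.retInj r u₂ hr h₂.1 (by rwa [hA.retLabel_map] at hxu)
  obtain ⟨p₁, hp₁, rfl⟩ := hA.exists_eq_map_of_arc hne.symm hB.arc₁
  obtain ⟨p₂, hp₂, rfl⟩ := hA.exists_eq_map_of_arc hne.symm hB.arc₂
  exact ⟨v₁, v₂, p₁, p₂, hA.parents_ne, hA.arc₁, hA.arc₂, fun h => hB.parents_ne (h ▸ rfl),
    hp₁, hp₂, hA.nonempty_iso_doubleUnfold h₁.1 h₂ hne hB⟩

end IsUnfoldAt

end IMLN

/-- **Lemma (unf-order).** Let `N` be an IMLN and `u₁, u₂ ∈ R_min(N)`.  Then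
`U(U(N,u₁),u₂) = U(U(N,u₂),u₁)`: unfolding at `u₁` and then at (the node
corresponding to) `u₂` yields the same IMLN, up to isomorphism, as unfolding at
`u₂` and then at `u₁`. -/
theorem IMLN.unfold_comm (X Λ : Type) (N : IMLN X Λ) (hN : N.IsIMLN)
    (u₁ u₂ : N.V) (h₁ : N.IsMinRet u₁) (h₂ : N.IsMinRet u₂)
    (A B A' B' : IMLN X Λ)
    (hA : IMLN.IsUnfoldAt N A u₁) (hB : IMLN.UnfoldStep A B (N.retLabel u₂))
    (hA' : IMLN.IsUnfoldAt N A' u₂) (hB' : IMLN.UnfoldStep A' B' (N.retLabel u₁)) :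
    IMLN.Isom B B' := by
  by_cases hne : u₁ = u₂
  · subst hne
    exact absurd hB (hA.not_unfoldStep_retLabel hN h₁)
  obtain ⟨v₁, v₂, p₁, p₂, hv, hv₁, hv₂, hp, hp₁, hp₂, ⟨e⟩⟩ :=
    hA.exists_iso_doubleUnfold hN h₁ h₂ hne hB
  obtain ⟨q₁, q₂, w₁, w₂, hq, hq₁, hq₂, hw, hw₁, hw₂, ⟨e'⟩⟩ :=
    hA'.exists_iso_doubleUnfold hN h₂ h₁ (Ne.symm hne) hB'
  obtain ⟨τ⟩ :=
    IMLN.nonempty_iso_doubleUnfold_of_parents hN h₁.1 h₂ hne hv₁ hv₂ hp hp₁ hp₂ hq hq₁ hq₂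
  obtain ⟨τ'⟩ := IMLN.nonempty_iso_doubleUnfold_of_parents hN h₂.1 h₁ (Ne.symm hne)
    hq₁ hq₂ hv hv₁ hv₂ hw hw₁ hw₂
  exact (e.symm.trans (τ.trans ((IMLN.doubleUnfoldComm N u₁ u₂ v₁ v₂ q₁ q₂).trans
    (τ'.trans e')))).isom
end

section
/- Let N be a pseudo-network and u ∈ R_min(N). Then F(U(N, u), u) = N, i.e. folding the unfolded IMLN of N at u back at u recovers N. -/
/-!
Unfolding at `u` embeds `N` into `U(N,u)` by a map `g` and adds a second copy `g'` of `N(u)`.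
Since `u` is the only node of `N` of out-degree one carrying its label, the elementary nodes of
`U(N,u)` with that label are exactly `g u` and `g' u`, so folding deletes one of the two copies
of `N(u)`. What is left is the image of an embedding of `N`: `g` itself if `g' u` was deleted,
and `g` outside `N(u)` glued to `g'` on `N(u)` if `g u` was deleted; in both cases the arc added
by folding restores the arc into `u` that unfolding had redirected. The second case needs the
minimality of `u`: every other node of `N(u)` has a single parent, itself in `N(u)`.
-/

namespace IMLN

variable {X Λ : Type}

theorem outDeg_eq_of_bijOn {N N' : IMLN X Λ} {a : N.V} {x : N'.V} {F : N.V → N'.V}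
    (hF : Set.BijOn F {b | N.Arc a b} {y | N'.Arc x y}) : N'.outDeg x = N.outDeg a :=
  hF.ncard_eq.symm

theorem arc_iff_of_inDeg_eq_two {N : IMLN X Λ} {u v₁ v₂ : N.V} (hu : N.inDeg u = 2)
    (hne : v₁ ≠ v₂) (h₁ : N.Arc v₁ u) (h₂ : N.Arc v₂ u) (a : N.V) :
    N.Arc a u ↔ a = v₁ ∨ a = v₂ := by
  have := N.fintypeV
  have hsub : ({v₁, v₂} : Set N.V) ⊆ {a | N.Arc a u} := by
    rintro a (rfl | rfl) <;> assumption
  have hle : {a | N.Arc a u}.ncard ≤ ({v₁, v₂} : Set N.V).ncard := by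
    rw [Set.ncard_pair hne]
    exact hu.le
  exact Set.ext_iff.mp (Set.eq_of_subset_of_ncard_le hsub hle).symm a

namespace IsIMLN

variable {N : IMLN X Λ}

theorem not_arc_root (hN : N.IsIMLN) (p : N.V) : ¬ N.Arc p N.root := by
  have := N.fintypeV
  have hempty : {q | N.Arc q N.root} = ∅ := (Set.ncard_eq_zero).mp hN.rootIn
  exact fun hp => hempty.subset hp

theorem not_reaches_of_arc (hN : N.IsIMLN) {a b : N.V} (hab : N.Arc a b) : ¬ N.Reaches b a :=
  fun hba => hN.acyclic a (Relation.TransGen.head' hab hba)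

theorem reaches_of_arc_of_isMinRet (hN : N.IsIMLN) {u a b : N.V} (hu : N.IsMinRet u)
    (hb : N.Reaches u b) (hbu : b ≠ u) (hab : N.Arc a b) : N.Reaches u a := by
  obtain ⟨c, hc, hcb⟩ := (Relation.ReflTransGen.cases_tail hb).resolve_left hbu
  have hbroot : b ≠ N.root := by
    rintro rfl
    exact hN.not_arc_root c hcb
  have hin : N.inDeg b = 1 := by
    rcases hN.degrees b hbroot with ⟨hin, -⟩ | hret
    · exact hin
    · exact absurd (hu.2 b hret hb) hbu
  obtain ⟨p, hp⟩ := Set.ncard_eq_one.mp hin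
  have hparent : ∀ q, N.Arc q b → q = p := fun q hq => by
    have hq' : q ∈ {q | N.Arc q b} := hq
    rwa [hp] at hq'
  rwa [hparent a hab, ← hparent c hcb]

theorem eq_of_outDeg_eq_one_of_retLabel_eq (hN : N.IsIMLN) {u a : N.V} (hu : N.IsRet u)
    (ha : N.outDeg a = 1) (hl : N.retLabel a = N.retLabel u) : a = u := by
  by_cases har : a = N.root
  · refine absurd hl.symm (hN.retElemLabels u a hu ⟨?_, ha⟩)
    rw [har, hN.rootIn]
    exact zero_le_one
  · rcases hN.degrees a har with ⟨hin, -⟩ | hret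
    · exact absurd hl.symm (hN.retElemLabels u a hu ⟨hin.le, ha⟩)
    · exact hN.retInj a u hret hu hl

end IsIMLN

theorem isom_of_range_eq {M N P : IMLN X Λ} {h : M.V → P.V} {k : N.V → P.V}
    (hh : Function.Injective h) (hk : Function.Injective k) (hrange : Set.range h = Set.range k)
    (R : P.V → P.V → Prop) (hMarc : ∀ x y, M.Arc x y ↔ R (h x) (h y))
    (hNarc : ∀ a b, N.Arc a b ↔ R (k a) (k b))
    (hMleaf : ∀ x, M.leafLabel x = P.leafLabel (h x))
    (hNleaf : ∀ a, P.leafLabel (k a) = N.leafLabel a)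
    (hMret : ∀ x, M.retLabel x = P.retLabel (h x))
    (hNret : ∀ a, P.retLabel (k a) = N.retLabel a) :
    Isom M N := by
  let f : M.V ≃ N.V := (Equiv.ofInjective h hh).trans
    ((Equiv.setCongr hrange).trans (Equiv.ofInjective k hk).symm)
  have hf : ∀ x, k (f x) = h x := fun x => Equiv.apply_ofInjective_symm hk _
  refine ⟨f, fun x y => ?_, fun x _ => ?_, fun x _ => ?_⟩
  · rw [hMarc, hNarc, hf, hf]
  · rw [Equiv.refl_apply, hMleaf, ← hf, hNleaf]
  · rw [Equiv.refl_apply, hMret, ← hf, hNret]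

structure UnfoldData (N N' : IMLN X Λ) (u : N.V) where
  g : N.V → N'.V
  g' : N.V → N'.V
  g_injective : Function.Injective g
  g'_injOn : ∀ a b : N.V, N.Reaches u a → N.Reaches u b → g' a = g' b → a = b
  g_ne_g' : ∀ a b : N.V, N.Reaches u b → g a ≠ g' b
  cover : ∀ x : N'.V, (∃ a, x = g a) ∨ (∃ a, N.Reaches u a ∧ x = g' a)
  leafLabel_g : ∀ a : N.V, N'.leafLabel (g a) = N.leafLabel a
  retLabel_g : ∀ a : N.V, N'.retLabel (g a) = N.retLabel a
  leafLabel_g' : ∀ a : N.V, N.Reaches u a → N'.leafLabel (g' a) = N.leafLabel a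
  retLabel_g' : ∀ a : N.V, N.Reaches u a → N'.retLabel (g' a) = N.retLabel a
  v₁ : N.V
  v₂ : N.V
  v₁_ne_v₂ : v₁ ≠ v₂
  arc_v₁ : N.Arc v₁ u
  arc_v₂ : N.Arc v₂ u
  arc_iff : ∀ x y : N'.V, N'.Arc x y ↔
    ((∃ a b : N.V, N.Arc a b ∧ b ≠ u ∧ x = g a ∧ y = g b) ∨
     (∃ a b : N.V, N.Reaches u a ∧ N.Reaches u b ∧ N.Arc a b ∧ x = g' a ∧ y = g' b) ∨
     (x = g v₁ ∧ y = g u) ∨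
     (x = g v₂ ∧ y = g' u))

theorem IsUnfoldAt.nonempty_unfoldData {N N' : IMLN X Λ} {u : N.V} (h : IsUnfoldAt N N' u) :
    Nonempty (UnfoldData N N' u) := by
  obtain ⟨g, g', hg, hg', hne, hcov, -, hl, hr, hl', hr', v₁, v₂, hv, h₁, h₂, harc⟩ := h
  exact ⟨g, g', hg, hg', hne, hcov, hl, hr, hl', hr', v₁, v₂, hv, h₁, h₂, harc⟩

namespace UnfoldData

variable {N N' : IMLN X Λ} {u : N.V} (W : UnfoldData N N' u)

theorem arc_u_iff (hu : N.inDeg u = 2) (a : N.V) : N.Arc a u ↔ a = W.v₁ ∨ a = W.v₂ :=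
  arc_iff_of_inDeg_eq_two hu W.v₁_ne_v₂ W.arc_v₁ W.arc_v₂ a

theorem arc_g_g_iff (a b : N.V) :
    N'.Arc (W.g a) (W.g b) ↔ (N.Arc a b ∧ b ≠ u) ∨ (a = W.v₁ ∧ b = u) := by
  rw [W.arc_iff]
  constructor
  · rintro (⟨a', b', hab, hbu, ha, hb⟩ | ⟨a', -, ha', -, -, ha, -⟩ | ⟨ha, hb⟩ |
      ⟨-, hb⟩)
    · obtain rfl := W.g_injective ha
      obtain rfl := W.g_injective hb
      exact .inl ⟨hab, hbu⟩
    · exact absurd ha (W.g_ne_g' a a' ha')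
    · exact .inr ⟨W.g_injective ha, W.g_injective hb⟩
    · exact absurd hb (W.g_ne_g' b u .refl)
  · rintro (⟨hab, hbu⟩ | ⟨rfl, rfl⟩)
    · exact .inl ⟨a, b, hab, hbu, rfl, rfl⟩
    · exact .inr (.inr (.inl ⟨rfl, rfl⟩))

theorem arc_g_g'_iff {a b : N.V} (hb : N.Reaches u b) :
    N'.Arc (W.g a) (W.g' b) ↔ a = W.v₂ ∧ b = u := by
  rw [W.arc_iff]
  constructor
  · rintro (⟨-, b', -, -, -, hb'⟩ | ⟨a', -, ha', -, -, ha, -⟩ | ⟨-, hb'⟩ |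
      ⟨ha, hb'⟩)
    · exact absurd hb'.symm (W.g_ne_g' b' b hb)
    · exact absurd ha (W.g_ne_g' a a' ha')
    · exact absurd hb'.symm (W.g_ne_g' u b hb)
    · exact ⟨W.g_injective ha, W.g'_injOn b u hb .refl hb'⟩
  · rintro ⟨rfl, rfl⟩
    exact .inr (.inr (.inr ⟨rfl, rfl⟩))

theorem not_arc_g'_g {a : N.V} (ha : N.Reaches u a) (b : N.V) : ¬ N'.Arc (W.g' a) (W.g b) := by
  rw [W.arc_iff]
  rintro (⟨a', -, -, -, h, -⟩ | ⟨-, b', -, hb', -, -, h⟩ | ⟨h, -⟩ | ⟨h, -⟩)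
  · exact W.g_ne_g' a' a ha h.symm
  · exact W.g_ne_g' b b' hb' h
  · exact W.g_ne_g' _ a ha h.symm
  · exact W.g_ne_g' _ a ha h.symm

theorem arc_g'_g'_iff {a b : N.V} (ha : N.Reaches u a) (hb : N.Reaches u b) :
    N'.Arc (W.g' a) (W.g' b) ↔ N.Arc a b := by
  rw [W.arc_iff]
  constructor
  · rintro (⟨a', -, -, -, h, -⟩ | ⟨a', b', ha', hb', hab, h, h'⟩ | ⟨h, -⟩ | ⟨h, -⟩)
    · exact absurd h.symm (W.g_ne_g' a' a ha)
    · rwa [W.g'_injOn a a' ha ha' h, W.g'_injOn b b' hb hb' h']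
    · exact absurd h.symm (W.g_ne_g' _ a ha)
    · exact absurd h.symm (W.g_ne_g' _ a ha)
  · exact fun hab => .inr (.inl ⟨a, b, ha, hb, hab, rfl, rfl⟩)

theorem exists_of_arc_g' {a : N.V} (ha : N.Reaches u a) {y : N'.V} (h : N'.Arc (W.g' a) y) :
    ∃ b, N.Arc a b ∧ y = W.g' b := by
  rcases W.cover y with ⟨b, rfl⟩ | ⟨b, hb, rfl⟩
  · exact absurd h (W.not_arc_g'_g ha b)
  · exact ⟨b, (W.arc_g'_g'_iff ha hb).mp h, rfl⟩

theorem eq_of_arc_g {x : N'.V} (h : N'.Arc x (W.g u)) : x = W.g W.v₁ := by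
  rcases W.cover x with ⟨a, rfl⟩ | ⟨a, ha, rfl⟩
  · rcases (W.arc_g_g_iff a u).mp h with ⟨-, hne⟩ | ⟨rfl, -⟩
    · exact absurd rfl hne
    · rfl
  · exact absurd h (W.not_arc_g'_g ha u)

theorem eq_of_arc_g' (hN : N.IsIMLN) {x : N'.V} (h : N'.Arc x (W.g' u)) : x = W.g W.v₂ := by
  rcases W.cover x with ⟨a, rfl⟩ | ⟨a, ha, rfl⟩
  · rw [((W.arc_g_g'_iff .refl).mp h).1]
  · exact absurd ha (hN.not_reaches_of_arc ((W.arc_g'_g'_iff ha .refl).mp h))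


theorem outDeg_g (hu : N.inDeg u = 2) (a : N.V) : N'.outDeg (W.g a) = N.outDeg a := by
  classical
  -- unfolding redirects the arc `(v₂, u)` to the copy `g' u`
  let F : N.V → N'.V := fun b => if a = W.v₂ ∧ b = u then W.g' u else W.g b
  have hF : ∀ b, b ≠ u ∨ a ≠ W.v₂ → F b = W.g b := fun b hb => if_neg (by tauto)
  have hFu : a = W.v₂ → F u = W.g' u := fun ha => if_pos ⟨ha, rfl⟩
  refine outDeg_eq_of_bijOn (F := F) ⟨fun b hb => ?_, fun b _ b' _ hbb' => ?_, fun y hy => ?_⟩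
  · by_cases hs : a = W.v₂ ∧ b = u
    · obtain ⟨rfl, rfl⟩ := hs
      exact (hFu rfl).symm ▸ (W.arc_g_g'_iff .refl).mpr ⟨rfl, rfl⟩
    · rw [Set.mem_ofPred_eq, hF b (by tauto), W.arc_g_g_iff]
      by_cases hbu : b = u
      · subst hbu
        exact .inr ⟨((W.arc_u_iff hu a).mp hb).resolve_right fun h => hs ⟨h, rfl⟩, rfl⟩
      · exact .inl ⟨hb, hbu⟩
  · simp only [F] at hbb'
    split_ifs at hbb' with h h'
    · rw [h.2, h'.2]
    · exact absurd hbb'.symm (W.g_ne_g' b' u .refl)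
    · exact absurd hbb' (W.g_ne_g' b u .refl)
    · exact W.g_injective hbb'
  · rcases W.cover y with ⟨b, rfl⟩ | ⟨b, hb, rfl⟩
    · rcases (W.arc_g_g_iff a b).mp hy with ⟨hab, hbu⟩ | ⟨rfl, rfl⟩
      · exact ⟨b, hab, hF b (.inl hbu)⟩
      · exact ⟨b, W.arc_v₁, hF b (.inr W.v₁_ne_v₂)⟩
    · obtain ⟨rfl, rfl⟩ := (W.arc_g_g'_iff hb).mp hy
      exact ⟨b, W.arc_v₂, hFu rfl⟩

theorem outDeg_g' {a : N.V} (ha : N.Reaches u a) : N'.outDeg (W.g' a) = N.outDeg a := by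
  have hch : ∀ {b}, N.Arc a b → N.Reaches u b := fun hb => Relation.ReflTransGen.tail ha hb
  refine outDeg_eq_of_bijOn (F := W.g') ⟨fun b hb => (W.arc_g'_g'_iff ha (hch hb)).mpr hb,
    fun b hb b' hb' h => W.g'_injOn b b' (hch hb) (hch hb') h, fun y hy => ?_⟩
  obtain ⟨b, hab, rfl⟩ := W.exists_of_arc_g' ha hy
  exact ⟨b, hab, rfl⟩

theorem eq_or_eq_of_isElem (hN : N.IsIMLN) (hu : N.IsRet u) {z : N'.V} (hz : N'.IsElem z)
    (hl : N'.retLabel z = N.retLabel u) : z = W.g u ∨ z = W.g' u := by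
  rcases W.cover z with ⟨a, rfl⟩ | ⟨a, ha, rfl⟩
  · left
    rw [hN.eq_of_outDeg_eq_one_of_retLabel_eq hu ((W.outDeg_g hu.1 a).symm.trans hz.2)
      ((W.retLabel_g a).symm.trans hl)]
  · right
    rw [hN.eq_of_outDeg_eq_one_of_retLabel_eq hu ((W.outDeg_g' ha).symm.trans hz.2)
      ((W.retLabel_g' a ha).symm.trans hl)]

theorem reaches_g'_iff {x : N'.V} :
    N'.Reaches (W.g' u) x ↔ ∃ b, N.Reaches u b ∧ x = W.g' b := by
  constructor
  · intro hx
    induction hx with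
    | refl => exact ⟨u, .refl, rfl⟩
    | tail _ hyz ih =>
      obtain ⟨b, hb, rfl⟩ := ih
      obtain ⟨c, hbc, rfl⟩ := W.exists_of_arc_g' hb hyz
      exact ⟨c, .tail hb hbc, rfl⟩
  · rintro ⟨b, hb, rfl⟩
    induction hb with
    | refl => exact .refl
    | tail hb hbc ih => exact .tail ih ((W.arc_g'_g'_iff hb (.tail hb hbc)).mpr hbc)

theorem reaches_g_iff (hN : N.IsIMLN) {x : N'.V} :
    N'.Reaches (W.g u) x ↔ ∃ b, N.Reaches u b ∧ x = W.g b := by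
  constructor
  · intro hx
    induction hx with
    | refl => exact ⟨u, .refl, rfl⟩
    | @tail y z _ hyz ih =>
      obtain ⟨b, hb, rfl⟩ := ih
      rcases W.cover z with ⟨c, rfl⟩ | ⟨c, hc, rfl⟩
      · rcases (W.arc_g_g_iff b c).mp hyz with ⟨hbc, -⟩ | ⟨-, rfl⟩
        · exact ⟨c, .tail hb hbc, rfl⟩
        · exact ⟨c, .refl, rfl⟩
      · obtain ⟨rfl, rfl⟩ := (W.arc_g_g'_iff hc).mp hyz
        exact absurd hb (hN.not_reaches_of_arc W.arc_v₂)
  · rintro ⟨b, hb, rfl⟩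
    induction hb with
    | refl => exact .refl
    | @tail c d hc hcd ih =>
      have hdu : d ≠ u := by
        rintro rfl
        exact hN.not_reaches_of_arc hcd hc
      exact .tail ih ((W.arc_g_g_iff c d).mpr (.inl ⟨hcd, hdu⟩))

theorem range_g : Set.range W.g = {x | ¬ N'.Reaches (W.g' u) x} := by
  ext x
  constructor
  · rintro ⟨a, rfl⟩ hr
    obtain ⟨b, hb, h⟩ := W.reaches_g'_iff.mp hr
    exact W.g_ne_g' a b hb h
  · intro hx
    rcases W.cover x with ⟨a, rfl⟩ | ⟨a, ha, rfl⟩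
    · exact ⟨a, rfl⟩
    · exact absurd (W.reaches_g'_iff.mpr ⟨a, ha, rfl⟩) hx

theorem arc_iff_g (hu : N.inDeg u = 2) (a b : N.V) :
    N.Arc a b ↔ N'.Arc (W.g a) (W.g b) ∨ (W.g a = W.g W.v₂ ∧ W.g b = W.g u) := by
  rw [W.arc_g_g_iff, W.g_injective.eq_iff, W.g_injective.eq_iff]
  by_cases hbu : b = u
  · subst hbu
    rw [W.arc_u_iff hu]
    tauto
  · simp [hbu]

noncomputable def gCopy (a : N.V) : N'.V := by
  classical exact if N.Reaches u a then W.g' a else W.g a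

theorem gCopy_of_reaches {a : N.V} (ha : N.Reaches u a) : W.gCopy a = W.g' a := by
  simp [gCopy, ha]

theorem gCopy_of_not_reaches {a : N.V} (ha : ¬ N.Reaches u a) : W.gCopy a = W.g a := by
  simp [gCopy, ha]

theorem gCopy_injective : Function.Injective W.gCopy := by
  intro a b hab
  by_cases ha : N.Reaches u a <;> by_cases hb : N.Reaches u b <;>
    simp only [W.gCopy_of_reaches, W.gCopy_of_not_reaches, ha, hb, not_false_eq_true] at hab
  · exact W.g'_injOn a b ha hb hab
  · exact absurd hab.symm (W.g_ne_g' b a ha)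
  · exact absurd hab (W.g_ne_g' a b hb)
  · exact W.g_injective hab

theorem leafLabel_gCopy (a : N.V) : N'.leafLabel (W.gCopy a) = N.leafLabel a := by
  by_cases ha : N.Reaches u a
  · rw [W.gCopy_of_reaches ha, W.leafLabel_g' a ha]
  · rw [W.gCopy_of_not_reaches ha, W.leafLabel_g]

theorem retLabel_gCopy (a : N.V) : N'.retLabel (W.gCopy a) = N.retLabel a := by
  by_cases ha : N.Reaches u a
  · rw [W.gCopy_of_reaches ha, W.retLabel_g' a ha]
  · rw [W.gCopy_of_not_reaches ha, W.retLabel_g]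

theorem range_gCopy (hN : N.IsIMLN) : Set.range W.gCopy = {x | ¬ N'.Reaches (W.g u) x} := by
  ext x
  constructor
  · rintro ⟨a, rfl⟩ hr
    obtain ⟨b, hb, h⟩ := (W.reaches_g_iff hN).mp hr
    by_cases ha : N.Reaches u a
    · rw [W.gCopy_of_reaches ha] at h
      exact W.g_ne_g' b a ha h.symm
    · rw [W.gCopy_of_not_reaches ha] at h
      exact ha (W.g_injective h ▸ hb)
  · intro hx
    rcases W.cover x with ⟨a, rfl⟩ | ⟨a, ha, rfl⟩
    · by_cases ha : N.Reaches u a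
      · exact absurd ((W.reaches_g_iff hN).mpr ⟨a, ha, rfl⟩) hx
      · exact ⟨a, W.gCopy_of_not_reaches ha⟩
    · exact ⟨a, W.gCopy_of_reaches ha⟩

theorem arc_iff_gCopy (hN : N.IsIMLN) (hu : N.IsMinRet u) (a b : N.V) :
    N.Arc a b ↔
      N'.Arc (W.gCopy a) (W.gCopy b) ∨ (W.gCopy a = W.g W.v₁ ∧ W.gCopy b = W.g' u) := by
  by_cases ha : N.Reaches u a <;> by_cases hb : N.Reaches u b
  · rw [W.gCopy_of_reaches ha, W.gCopy_of_reaches hb, W.arc_g'_g'_iff ha hb,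
      or_iff_left fun h => W.g_ne_g' _ a ha h.1.symm]
  · rw [W.gCopy_of_reaches ha, W.gCopy_of_not_reaches hb]
    refine iff_of_false (fun hab => hb (.tail ha hab)) ?_
    rintro (h | h)
    exacts [W.not_arc_g'_g ha b h, W.g_ne_g' _ a ha h.1.symm]
  · rw [W.gCopy_of_not_reaches ha, W.gCopy_of_reaches hb, W.arc_g_g'_iff hb,
      W.g_injective.eq_iff]
    constructor
    · intro hab
      obtain rfl : b = u :=
        by_contra fun hbu => ha (hN.reaches_of_arc_of_isMinRet hu hb hbu hab)
      rcases (W.arc_u_iff hu.1.1 a).mp hab with rfl | rfl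
      · exact .inr ⟨rfl, rfl⟩
      · exact .inl ⟨rfl, rfl⟩
    · rintro (⟨rfl, rfl⟩ | ⟨rfl, h⟩)
      · exact W.arc_v₂
      · rw [W.g'_injOn b u hb .refl h]
        exact W.arc_v₁
  · have hbu : b ≠ u := by
      rintro rfl
      exact hb .refl
    rw [W.gCopy_of_not_reaches ha, W.gCopy_of_not_reaches hb, W.arc_g_g_iff,
      or_iff_left fun h => W.g_ne_g' b u .refl h.2]
    simp [hbu]

end UnfoldData

end IMLN

theorem IMLN.fold_unfold_general (X Λ : Type) (N : IMLN X Λ) (hN : N.IsIMLN)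
    (u : N.V) (hu : N.IsMinRet u)
    (N' : IMLN X Λ) (hU : IMLN.IsUnfoldAt N N' u)
    (w : N'.V) (hw : IMLN.IsEMax N' w) (hlw : N'.retLabel w = N.retLabel u)
    (M : IMLN X Λ) (hF : IMLN.IsFoldAt N' M w) :
    IMLN.Isom M N := by
  obtain ⟨W⟩ := hU.nonempty_unfoldData
  obtain ⟨-, v, hvw, hv, hlv, -, vp, hvp, h, hh, hhv, hhv', -, hleaf, hret, harc⟩ := hF
  have hrange : Set.range h = {x | ¬ N'.Reaches v x} :=
    Set.ext fun x => ⟨by rintro ⟨y, rfl⟩; exact hhv y, hhv' x⟩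
  rcases W.eq_or_eq_of_isElem hN hu.1 hw.1 hlw with rfl | rfl <;>
    rcases W.eq_or_eq_of_isElem hN hu.1 hv.1 (hlv.trans hlw) with rfl | rfl
  · exact absurd rfl hvw
  · obtain rfl := W.eq_of_arc_g' hN hvp
    exact isom_of_range_eq hh W.g_injective (hrange.trans W.range_g.symm)
      (fun x y => N'.Arc x y ∨ (x = W.g W.v₂ ∧ y = W.g u)) harc
      (W.arc_iff_g hu.1.1) hleaf W.leafLabel_g hret W.retLabel_g
  · obtain rfl := W.eq_of_arc_g hvp
    exact isom_of_range_eq hh W.gCopy_injective (hrange.trans (W.range_gCopy hN).symm)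
      (fun x y => N'.Arc x y ∨ (x = W.g W.v₁ ∧ y = W.g' u)) harc
      (W.arc_iff_gCopy hN hu) hleaf W.leafLabel_gCopy hret W.retLabel_gCopy
  · exact absurd rfl hvw

/-- **Lemma (folding).** Let `N` be a pseudo-network and `u ∈ R_min(N)`.  Then
`F(U(N,u), u) = N`: folding the unfolded IMLN of `N` at `u` back at (a copy of)
`u` recovers `N`, up to isomorphism. -/
theorem IMLN.fold_unfold (X Λ : Type) (N : IMLN X Λ) (hN : N.IsIMLN)
    (hps : IMLN.IsPseudo N) (u : N.V) (hu : N.IsMinRet u)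
    (N' : IMLN X Λ) (hU : IMLN.IsUnfoldAt N N' u)
    (w : N'.V) (hw : IMLN.IsEMax N' w) (hlw : N'.retLabel w = N.retLabel u)
    (M : IMLN X Λ) (hF : IMLN.IsFoldAt N' M w) :
    IMLN.Isom M N :=
  IMLN.fold_unfold_general X Λ N hN u hu N' hU w hw hlw M hF
end
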